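/- arXiv:2510.11840 — 5 statements merged into one kernel-verified Lean document; each statement's English description precedes it below -/
import Mathlib

section
/- Let a, b, p, f, g, d be real numbers with a ≥ 0, and let M be the 4×4 real matrix with rows (0, 1, 0, 0), (a, b, p, 0), (0, 0, 0, 0), (0, f, g, d). Then every complex eigenvalue of M is real; that is, the condition a ≥ 0 is sufficient for weak hyperbolicity of the associated first-order system. -/
/-- If `a ≥ 0`, then every complex eigenvalue of the flux Jacobian
`M = !![0,1,0,0; a,b,p,0; 0,0,0,0; 0,f,g,d]` is real: the condition `a ≥ 0`
suffices for weak hyperbolicity. -/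
theorem flux_jacobian_weak_hyperbolicity (a b p f g d : ℝ) (ha : a ≥ 0)
    (M : Matrix (Fin 4) (Fin 4) ℝ)
    (hM : M = !![0, 1, 0, 0; a, b, p, 0; 0, 0, 0, 0; 0, f, g, d]) :
    ∀ z : ℂ, Module.End.HasEigenvalue (Matrix.toLin' (M.map Complex.ofReal)) z → z.im = 0 := by
  subst hM
  intro z hz
  obtain ⟨v, hv, hv0⟩ := hz.exists_hasEigenvector
  rw [Module.End.mem_eigenspace_iff] at hv
  rw [Matrix.toLin'_apply] at hv
  by_contra him
  -- component equations
  have h0 := congr_fun hv 0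
  have h1 := congr_fun hv 1
  have h2 := congr_fun hv 2
  have h3 := congr_fun hv 3
  simp [Matrix.mulVec, dotProduct, Fin.sum_univ_four, Matrix.map_apply] at h0 h1 h2 h3
  -- z ≠ 0
  have hz0 : z ≠ 0 := fun h => him (by simp [h])
  -- v 2 = 0
  have hv2 : v 2 = 0 := by
    rcases h2 with h | h
    · exact absurd h hz0
    · exact h
  rw [hv2] at h1 h3
  simp at h1 h3
  by_cases hv0' : v 0 = 0
  · have hv1 : v 1 = 0 := by rw [h0, hv0', mul_zero]
    have hv3 : v 3 ≠ 0 := by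
      intro h
      apply hv0
      funext i
      fin_cases i <;> simp_all
    rw [hv1] at h3
    simp at h3
    rcases h3 with h | h
    · rw [← h] at him; simp at him
    · exact hv3 h
  · -- z^2 = b z + a
    have key : z ^ 2 = b * z + a := by
      have h1' : (a : ℂ) * v 0 + b * (z * v 0) = z * (z * v 0) := by
        rw [← h0]; linear_combination h1
      have : ((a : ℂ) + b * z) * v 0 = z ^ 2 * v 0 := by ring_nf; ring_nf at h1'; linear_combination h1'
      have := mul_right_cancel₀ hv0' this
      linear_combination -this
    -- take imaginary and real parts
    have him2 : (z ^ 2).im = (b * z + a : ℂ).im := by rw [key]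
    have hre : (z ^ 2).re = (b * z + a : ℂ).re := by rw [key]
    simp [Complex.add_im, Complex.mul_im, Complex.add_re, Complex.mul_re, pow_two] at him2 hre
    -- him2 : z.re * z.im + z.im * z.re = b * z.im
    have h4 : (2 * z.re - b) * z.im = 0 := by linear_combination him2
    rcases mul_eq_zero.mp h4 with h | h
    · have him3 : 0 < z.im * z.im := mul_self_pos.mpr him
      have hb : b = 2 * z.re := by linarith
      rw [hb] at hre
      nlinarith [sq_nonneg z.re, him3, ha]
    · exact him h
end

section
/- Let α, ρ, c_V, c be positive real numbers, and let b, p, g, h, a₀ be real numbers satisfying the three linear constraints b ≤ 0, g ≤ −(α/c)·h, and h ≤ α/(ρ c_V). Let M be the 4×4 real matrix with rows (0, 0, 0, 0), (0, b, p, 0), (0, 0, −α/(ρ c_V), c/(ρ c_V)), (a₀, 0, g, h). Then every complex eigenvalue λ of M satisfies Re(λ) ≤ 0. -/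
/-- Linear source-stability: under the constraints `b ≤ 0`, `g ≤ −(α/c)h`,
`h ≤ α/(ρ c_V)`, every complex eigenvalue of the source Jacobian
`M = !![0,0,0,0; 0,b,p,0; 0,0,−α/(ρc_V),c/(ρc_V); a₀,0,g,h]` has nonpositive
real part. -/
theorem source_jacobian_linear_stability (α ρ cV c : ℝ)
    (hα : 0 < α) (hρ : 0 < ρ) (hcV : 0 < cV) (hc : 0 < c)
    (b p g h a₀ : ℝ)
    (hb : b ≤ 0) (hg : g ≤ -(α / c) * h) (hh : h ≤ α / (ρ * cV))
    (M : Matrix (Fin 4) (Fin 4) ℝ)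
    (hM : M = !![0, 0, 0, 0; 0, b, p, 0;
                 0, 0, -(α / (ρ * cV)), c / (ρ * cV); a₀, 0, g, h]) :
    ∀ z : ℂ, Module.End.HasEigenvalue (Matrix.toLin' (M.map Complex.ofReal)) z → z.re ≤ 0 := by
  intro z hz
  by_contra h0
  push_neg at h0
  set A : ℝ := α / (ρ * cV) with hA
  set C : ℝ := c / (ρ * cV) with hC
  have hApos : 0 < A := div_pos hα (mul_pos hρ hcV)
  have hCpos : 0 < C := div_pos hc (mul_pos hρ hcV)
  have hCg : C * g + A * h ≤ 0 := by
    have h1 : C * g ≤ C * (-(α / c) * h) := by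
      exact mul_le_mul_of_nonneg_left hg hCpos.le
    have h2 : C * (-(α / c) * h) = -(A * h) := by
      field_simp [hA, hC]
      ring
    nlinarith
  obtain ⟨v, hv⟩ := hz.exists_hasEigenvector
  have hne : v ≠ 0 := hv.2
  have hMv : (M.map Complex.ofReal).mulVec v = z • v := by
    have := hv.apply_eq_smul
    simpa [Matrix.toLin'_apply] using this
  have hzne : z ≠ 0 := fun hz0 => by simp [hz0] at h0
  have hv0 : v 0 = 0 := by
    have := congrFun hMv 0
    simp [Matrix.mulVec, dotProduct, Fin.sum_univ_four, hM, Matrix.map_apply] at this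
    rcases this with h' | h'
    · exact absurd h' hzne
    · exact h'
  have eq1 : (b : ℂ) * v 1 + (p : ℂ) * v 2 = z * v 1 := by
    have := congrFun hMv 1
    simpa [Matrix.mulVec, dotProduct, Fin.sum_univ_four, hM, Matrix.map_apply] using this
  have eq2 : -(A : ℂ) * v 2 + (C : ℂ) * v 3 = z * v 2 := by
    have := congrFun hMv 2
    simpa [Matrix.mulVec, dotProduct, Fin.sum_univ_four, hM, Matrix.map_apply, hA, hC] using this
  have eq3 : (a₀ : ℂ) * v 0 + (g : ℂ) * v 2 + (h : ℂ) * v 3 = z * v 3 := by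
    have := congrFun hMv 3
    simpa [Matrix.mulVec, dotProduct, Fin.sum_univ_four, hM, Matrix.map_apply] using this
  by_cases hv2 : v 2 = 0
  · -- then v 3 = 0, then v 1 = 0, contradiction
    have hv3 : v 3 = 0 := by
      have : (C : ℂ) * v 3 = 0 := by
        have := eq2
        rw [hv2] at this
        simpa using this
      rcases mul_eq_zero.mp this with h' | h'
      · exact absurd h' (by exact_mod_cast hCpos.ne')
      · exact h'
    have hv1 : v 1 = 0 := by
      have : (z - (b : ℂ)) * v 1 = 0 := by
        rw [hv2] at eq1
        linear_combination -eq1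
      rcases mul_eq_zero.mp this with h' | h'
      · exfalso
        have : (z - (b : ℂ)).re = z.re - b := by simp
        rw [h'] at this
        simp at this
        nlinarith
      · exact h'
    apply hne
    funext i
    fin_cases i <;> simp [hv0, hv1, hv2, hv3]
  · -- main quadratic branch
    have key : (z + (A : ℂ)) * (z - (h : ℂ)) = (C : ℂ) * (g : ℂ) := by
      have h3 : (g : ℂ) * v 2 = (z - (h : ℂ)) * v 3 := by
        rw [hv0] at eq3
        linear_combination eq3
      have h2 : (C : ℂ) * v 3 = (z + (A : ℂ)) * v 2 := by linear_combination eq2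
      refine mul_left_cancel₀ hv2 ?_
      calc v 2 * ((z + (A : ℂ)) * (z - (h : ℂ)))
            = (z - (h : ℂ)) * ((z + (A : ℂ)) * v 2) := by ring
          _ = (z - (h : ℂ)) * ((C : ℂ) * v 3) := by rw [h2]
          _ = (C : ℂ) * ((z - (h : ℂ)) * v 3) := by ring
          _ = (C : ℂ) * ((g : ℂ) * v 2) := by rw [h3]
          _ = v 2 * ((C : ℂ) * (g : ℂ)) := by ring
    rw [Complex.ext_iff] at key
    obtain ⟨kre, kim⟩ := key
    simp only [Complex.add_re, Complex.add_im, Complex.mul_re, Complex.mul_im,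
      Complex.sub_re, Complex.sub_im, Complex.ofReal_re, Complex.ofReal_im] at kre kim
    have hAh : h ≤ A := hh
    have hfac : z.im * ((z.re + A) + (z.re - h)) = 0 := by linear_combination kim
    have hy : z.im = 0 := by
      rcases mul_eq_zero.mp hfac with h' | h'
      · exact h'
      · nlinarith
    nlinarith [kre, hCg]
end

section
/- Let h, k, c, T be positive real numbers. Then the frequency-integrated Planck spectral radiance satisfies ∫_0^∞ (2hν³/c²)·(e^{hν/(kT)} − 1)^{−1} dν = 2π⁴(kT)⁴/(15 h³ c²). -/
open MeasureTheory Real Set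

lemma planck_term_integral (n : ℕ) :
    ∫ x in Ioi (0 : ℝ), x ^ 3 * Real.exp (-(((n : ℝ) + 1) * x)) = 6 / ((n : ℝ) + 1) ^ 4 := by
  have hn : (0 : ℝ) < (n : ℝ) + 1 := by positivity
  have h := integral_rpow_mul_exp_neg_mul_Ioi (a := 4) (r := (n : ℝ) + 1) (by norm_num) hn
  have h1 : ((1 : ℝ) / ((n : ℝ) + 1)) ^ (4 : ℝ) = (1 / ((n : ℝ) + 1)) ^ (4 : ℕ) := by
    rw [← Real.rpow_natCast]; norm_num
  have hg : Real.Gamma 4 = 6 := by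
    rw [show (4 : ℝ) = ((3 : ℕ) : ℝ) + 1 by norm_num, Real.Gamma_nat_eq_factorial]
    norm_num [Nat.factorial]
  have h2 : ∀ x : ℝ, x ^ ((4 : ℝ) - 1) = x ^ (3 : ℕ) := by
    intro x
    rw [show (4 : ℝ) - 1 = ((3 : ℕ) : ℝ) by norm_num, Real.rpow_natCast]
  simp_rw [h2] at h
  rw [h, h1, hg, div_pow]
  ring

lemma planck_term_integrable (n : ℕ) :
    IntegrableOn (fun x : ℝ => x ^ 3 * Real.exp (-(((n : ℝ) + 1) * x))) (Ioi 0) := by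
  have hn : (0 : ℝ) < (n : ℝ) + 1 := by positivity
  have := integrableOn_rpow_mul_exp_neg_mul_rpow (p := 1) (s := 3) (b := (n : ℝ) + 1)
    (by norm_num) one_pos hn
  refine this.congr_fun (fun x hx => ?_) measurableSet_Ioi
  dsimp only
  rw [Real.rpow_one, show (3 : ℝ) = ((3 : ℕ) : ℝ) by norm_num, Real.rpow_natCast, neg_mul]

lemma planck_hasSum (x : ℝ) (hx : 0 < x) :
    HasSum (fun n : ℕ => x ^ 3 * Real.exp (-(((n : ℝ) + 1) * x)))
      (x ^ 3 * (Real.exp x - 1)⁻¹) := by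
  have hr1 : Real.exp (-x) < 1 := Real.exp_lt_one_iff.mpr (by linarith)
  have hgeo := (hasSum_geometric_of_lt_one (Real.exp_pos (-x)).le hr1).mul_left
    (x ^ 3 * Real.exp (-x))
  have hex : (1 : ℝ) < Real.exp x := by simpa using Real.exp_lt_exp.mpr hx
  have hfun : (fun n : ℕ => x ^ 3 * Real.exp (-(((n : ℝ) + 1) * x)))
      = fun n : ℕ => x ^ 3 * Real.exp (-x) * Real.exp (-x) ^ n := by
    funext n
    rw [← Real.exp_nat_mul, mul_assoc, ← Real.exp_add]
    congr 1
    ring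
  have hval : x ^ 3 * (Real.exp x - 1)⁻¹ = x ^ 3 * Real.exp (-x) * (1 - Real.exp (-x))⁻¹ := by
    rw [Real.exp_neg]
    have he : Real.exp x ≠ 0 := (Real.exp_pos x).ne'
    have hne : Real.exp x - 1 ≠ 0 := by linarith
    field_simp
  rw [hfun, hval]
  exact hgeo

lemma bose_integral : ∫ x in Ioi (0 : ℝ), x ^ 3 * (Real.exp x - 1)⁻¹ = π ^ 4 / 15 := by
  have h4 := hasSum_zeta_four
  have h5 : HasSum (fun n : ℕ => (1 : ℝ) / ((n : ℝ) + 1) ^ 4) (π ^ 4 / 90) := by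
    have := (hasSum_nat_add_iff' (f := fun n : ℕ => (1 : ℝ) / (n : ℝ) ^ 4) 1).mpr h4
    simp only [Finset.range_one, Finset.sum_singleton, Nat.cast_zero] at this
    norm_num at this
    convert this using 2 with n
    · rfl
    push_cast
    ring
  have hsum : HasSum (fun n : ℕ => (6 : ℝ) / ((n : ℝ) + 1) ^ 4) (π ^ 4 / 15) := by
    have := h5.mul_left 6
    rw [show π ^ 4 / 15 = 6 * (π ^ 4 / 90) by ring]
    simpa [div_eq_mul_inv] using this
  have key := MeasureTheory.hasSum_integral_of_summable_integral_norm
    (μ := volume.restrict (Ioi 0))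
    (F := fun (n : ℕ) (x : ℝ) => x ^ 3 * Real.exp (-(((n : ℝ) + 1) * x)))
    (fun n => planck_term_integrable n) ?_
  · have h1 : (∫ x in Ioi (0:ℝ), ∑' n : ℕ, x ^ 3 * Real.exp (-(((n : ℝ) + 1) * x)))
        = ∫ x in Ioi (0:ℝ), x ^ 3 * (Real.exp x - 1)⁻¹ :=
      setIntegral_congr_fun measurableSet_Ioi (fun x hx => (planck_hasSum x hx).tsum_eq)
    have h2 : (fun n : ℕ => ∫ x in Ioi (0:ℝ), x ^ 3 * Real.exp (-(((n : ℝ) + 1) * x)))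
        = fun n : ℕ => (6 : ℝ) / ((n : ℝ) + 1) ^ 4 := funext planck_term_integral
    rw [h1, h2] at key
    exact (hsum.unique key).symm
  · apply Summable.congr hsum.summable
    intro n
    rw [← planck_term_integral n]
    refine (setIntegral_congr_fun measurableSet_Ioi (fun x hx => ?_)).symm
    have hx' : (0 : ℝ) ≤ x := (mem_Ioi.mp hx).le
    rw [Real.norm_eq_abs, abs_of_nonneg (mul_nonneg (pow_nonneg hx' 3) (Real.exp_pos _).le)]

/-- Stefan–Boltzmann integral of the Planck spectral radiance:
`∫_0^∞ (2hν³/c²)(e^{hν/(kT)} − 1)⁻¹ dν = 2π⁴(kT)⁴/(15h³c²)`. -/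
theorem planck_integral (h k c T : ℝ) (hh : 0 < h) (hk : 0 < k) (hc : 0 < c) (hT : 0 < T) :
    ∫ ν in Set.Ioi (0 : ℝ),
        (2 * h * ν ^ 3 / c ^ 2) * (Real.exp (h * ν / (k * T)) - 1)⁻¹
      = 2 * Real.pi ^ 4 * (k * T) ^ 4 / (15 * h ^ 3 * c ^ 2) := by
  set a : ℝ := h / (k * T) with ha_def
  have ha : 0 < a := by positivity
  have hcomp := MeasureTheory.integral_comp_mul_left_Ioi
    (fun x : ℝ => x ^ 3 * (Real.exp x - 1)⁻¹) 0 ha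
  rw [mul_zero, bose_integral, smul_eq_mul] at hcomp
  have heq : ∀ ν ∈ Ioi (0:ℝ),
      (2 * h * ν ^ 3 / c ^ 2) * (Real.exp (h * ν / (k * T)) - 1)⁻¹
      = (2 * h / c ^ 2 / a ^ 3) *
        ((a * ν) ^ 3 * (Real.exp (a * ν) - 1)⁻¹) := by
    intro ν _
    have harg : h * ν / (k * T) = a * ν := by
      rw [ha_def, div_mul_eq_mul_div]
    rw [harg]
    generalize (Real.exp (a * ν) - 1)⁻¹ = E
    rw [mul_pow]
    field_simp
  rw [setIntegral_congr_fun measurableSet_Ioi heq, integral_const_mul, hcomp]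
  rw [ha_def]
  field_simp
end

section
/- Let γ, h, k, c, T be positive real numbers. Then the Planck-weighted Larsen opacity satisfies σ_P(T) := (∫_0^∞ σ(ν,T)·B(ν,T) dν) / (∫_0^∞ B(ν,T) dν) = (15γ/(π⁴ k³))·T^{−3}. -/
open MeasureTheory

/-- `∫_0^∞ e^{-a x} dx = 1/a`. -/
lemma aux_integral_exp_neg_mul {a : ℝ} (ha : 0 < a) :
    ∫ x in Set.Ioi (0 : ℝ), Real.exp (-(a * x)) = 1 / a := by
  have h := Real.integral_rpow_mul_exp_neg_mul_Ioi (by norm_num : (0:ℝ) < 1) ha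
  simp only [sub_self, Real.rpow_zero, one_mul, Real.Gamma_one, Real.rpow_one, mul_one] at h
  exact h

/-- `∫_0^∞ x^3 e^{-a x} dx = 6/a⁴`. -/
lemma aux_integral_cube_exp_neg_mul {a : ℝ} (ha : 0 < a) :
    ∫ x in Set.Ioi (0 : ℝ), x ^ 3 * Real.exp (-(a * x)) = 6 / a ^ 4 := by
  have h := Real.integral_rpow_mul_exp_neg_mul_Ioi (by norm_num : (0:ℝ) < 4) ha
  have h4 : (4:ℝ) - 1 = ((3:ℕ):ℝ) := by norm_num
  rw [h4] at h
  simp_rw [Real.rpow_natCast] at h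
  rw [show ((1:ℝ)/a) ^ (4:ℝ) = 1 / a ^ 4 by
        rw [show (4:ℝ) = ((4:ℕ):ℝ) by norm_num, Real.rpow_natCast]
        rw [one_div, one_div, inv_pow],
      show Real.Gamma 4 = 6 by
        rw [show (4:ℝ) = ((3:ℕ):ℝ) + 1 by norm_num, Real.Gamma_nat_eq_factorial]
        norm_num [Nat.factorial]] at h
  rw [h]; ring

/-- Geometric series for `(e^y - 1)⁻¹`. -/
lemma aux_hasSum_geom {y : ℝ} (hy : 0 < y) :
    HasSum (fun n : ℕ => Real.exp (-((n + 1) * y))) ((Real.exp y - 1)⁻¹) := by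
  have hr0 : 0 < Real.exp (-y) := Real.exp_pos _
  have hr1 : Real.exp (-y) < 1 := Real.exp_lt_one_iff.mpr (by linarith)
  have hgeo := hasSum_geometric_of_lt_one hr0.le hr1
  have hmul := hgeo.mul_left (Real.exp (-y))
  have hterm : ∀ n : ℕ, Real.exp (-y) * Real.exp (-y) ^ n = Real.exp (-((n + 1) * y)) := by
    intro n
    rw [← Real.exp_nat_mul, ← Real.exp_add]
    ring_nf
  have hval : Real.exp (-y) * (1 - Real.exp (-y))⁻¹ = (Real.exp y - 1)⁻¹ := by
    have h1 : Real.exp y - 1 ≠ 0 := by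
      have := Real.one_lt_exp_iff.mpr hy
      linarith
    have h2 : (1 : ℝ) - Real.exp (-y) ≠ 0 := by
      have := Real.exp_lt_one_iff.mpr (show -y < 0 by linarith)
      linarith
    rw [Real.exp_neg] at *
    field_simp
  rw [← hval]
  exact hmul.congr_fun (fun n => (hterm n).symm)

/-- `∫_0^∞ x^3/(e^{ax}-1) dx = (π⁴/15)/a⁴`. -/
lemma aux_integral_planck {a : ℝ} (ha : 0 < a) :
    ∫ x in Set.Ioi (0 : ℝ), x ^ 3 * (Real.exp (a * x) - 1)⁻¹
      = Real.pi ^ 4 / 15 / a ^ 4 := by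
  set F : ℕ → ℝ → ℝ := fun n x => x ^ 3 * Real.exp (-(((n : ℝ) + 1) * a * x)) with hF
  have hInt : ∀ n : ℕ, Integrable (F n) (volume.restrict (Set.Ioi (0:ℝ))) := by
    intro n
    have hb : 0 < ((n : ℝ) + 1) * a := by positivity
    have := integrableOn_rpow_mul_exp_neg_mul_rpow
      (show (-1:ℝ) < 3 by norm_num) (show (0:ℝ) < 1 by norm_num) hb
    refine (IntegrableOn.congr_fun this (fun x hx => ?_) measurableSet_Ioi)
    simp only [Real.rpow_one, hF]
    rw [show ((3:ℝ)) = ((3:ℕ):ℝ) by norm_num, Real.rpow_natCast]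
    ring_nf
  have hval : ∀ n : ℕ, ∫ x in Set.Ioi (0:ℝ), F n x = 6 / (((n:ℝ) + 1) * a) ^ 4 := by
    intro n
    have hb : 0 < ((n : ℝ) + 1) * a := by positivity
    exact aux_integral_cube_exp_neg_mul hb
  have hnorm : ∀ n : ℕ, ∫ x in Set.Ioi (0:ℝ), ‖F n x‖ = 6 / (((n:ℝ) + 1) * a) ^ 4 := by
    intro n
    rw [← hval n]
    refine setIntegral_congr_fun measurableSet_Ioi (fun x hx => ?_)
    simp only [hF, Real.norm_eq_abs]
    exact abs_of_nonneg (mul_nonneg (pow_nonneg (le_of_lt hx) 3) (Real.exp_pos _).le)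
  have hsummable : Summable (fun n : ℕ => 6 / (((n:ℝ) + 1) * a) ^ 4) := by
    have h1 : Summable (fun n : ℕ => (1:ℝ) / ((n:ℝ) + 1) ^ 4) := by
      have h2 := (Real.summable_one_div_nat_pow (p := 4)).mpr (by norm_num)
      exact ((summable_nat_add_iff 1).mpr h2).congr (fun n => by push_cast; ring)
    have := h1.mul_left (6 / a ^ 4)
    refine this.congr (fun n => ?_)
    field_simp
  have hsum_int : Summable (fun n : ℕ => ∫ x in Set.Ioi (0:ℝ), ‖F n x‖) := by
    refine hsummable.congr (fun n => (hnorm n).symm)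
  have key := integral_tsum_of_summable_integral_norm hInt hsum_int
  -- compute the left tsum
  have hzeta : HasSum (fun n : ℕ => (1:ℝ) / ((n:ℝ) + 1) ^ 4) (Real.pi ^ 4 / 90) := by
    have h := hasSum_zeta_four
    rw [← hasSum_nat_add_iff' 1] at h
    simpa using h
  have hlhs : HasSum (fun n : ℕ => ∫ x in Set.Ioi (0:ℝ), F n x)
      (Real.pi ^ 4 / 15 / a ^ 4) := by
    have h6 := hzeta.mul_left (6 / a ^ 4)
    have h7 : HasSum (fun n : ℕ => 6 / (((n:ℝ) + 1) * a) ^ 4)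
        (6 / a ^ 4 * (Real.pi ^ 4 / 90)) :=
      h6.congr_fun (fun n => by field_simp)
    have h8 : (6 / a ^ 4 * (Real.pi ^ 4 / 90)) = Real.pi ^ 4 / 15 / a ^ 4 := by
      field_simp; ring
    rw [h8] at h7
    exact h7.congr_fun (fun n => hval n)
  rw [hlhs.tsum_eq] at key
  rw [key]
  refine setIntegral_congr_fun measurableSet_Ioi (fun x hx => ?_)
  have hx0 : 0 < x := hx
  have hax : 0 < a * x := by positivity
  have hs := (aux_hasSum_geom hax).mul_left (x ^ 3)
  symm
  refine HasSum.tsum_eq (hs.congr_fun (fun n => ?_))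
  simp only [hF]
  ring_nf

/-- The Planck-weighted Larsen opacity:
`σ_P(T) = (∫_0^∞ σ(ν,T) B(ν,T) dν) / (∫_0^∞ B(ν,T) dν) = (15γ/(π⁴k³)) T⁻³`. -/
theorem larsen_planck_opacity (γ h k c T : ℝ)
    (hγ : 0 < γ) (hh : 0 < h) (hk : 0 < k) (hc : 0 < c) (hT : 0 < T) :
    (∫ ν in Set.Ioi (0 : ℝ),
        (γ / (h * ν) ^ 3 * (1 - Real.exp (-(h * ν / (k * T)))))
          * ((2 * h * ν ^ 3 / c ^ 2) * (Real.exp (h * ν / (k * T)) - 1)⁻¹))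
      / (∫ ν in Set.Ioi (0 : ℝ),
          (2 * h * ν ^ 3 / c ^ 2) * (Real.exp (h * ν / (k * T)) - 1)⁻¹)
    = (15 * γ / (Real.pi ^ 4 * k ^ 3)) / T ^ 3 := by
  have ha : 0 < h / (k * T) := by positivity
  -- numerator
  have hnum : (∫ ν in Set.Ioi (0 : ℝ),
        (γ / (h * ν) ^ 3 * (1 - Real.exp (-(h * ν / (k * T)))))
          * ((2 * h * ν ^ 3 / c ^ 2) * (Real.exp (h * ν / (k * T)) - 1)⁻¹))
      = 2 * γ * (k * T) / (h ^ 2 * c ^ 2 * h) := by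
    have heq : ∀ ν ∈ Set.Ioi (0:ℝ),
        (γ / (h * ν) ^ 3 * (1 - Real.exp (-(h * ν / (k * T)))))
          * ((2 * h * ν ^ 3 / c ^ 2) * (Real.exp (h * ν / (k * T)) - 1)⁻¹)
        = (2 * γ / (h ^ 2 * c ^ 2)) * Real.exp (-(h / (k * T) * ν)) := by
      intro ν hν
      have hν0 : 0 < ν := hν
      set x : ℝ := h * ν / (k * T) with hxdef
      have hx : 0 < x := by positivity
      have h1 : Real.exp x - 1 ≠ 0 := by
        have := Real.one_lt_exp_iff.mpr hx
        linarith
      have hkey : 1 - Real.exp (-x) = Real.exp (-x) * (Real.exp x - 1) := by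
        rw [mul_sub, ← Real.exp_add]
        simp
      have hxx : h / (k * T) * ν = x := by rw [hxdef]; ring
      rw [hxx, hkey]
      field_simp
    rw [setIntegral_congr_fun measurableSet_Ioi heq, integral_const_mul,
      aux_integral_exp_neg_mul ha]
    field_simp
  -- denominator
  have hden : (∫ ν in Set.Ioi (0 : ℝ),
          (2 * h * ν ^ 3 / c ^ 2) * (Real.exp (h * ν / (k * T)) - 1)⁻¹)
      = (2 * h / c ^ 2) * (Real.pi ^ 4 / 15 / (h / (k * T)) ^ 4) := by
    have heq : ∀ ν ∈ Set.Ioi (0:ℝ),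
        (2 * h * ν ^ 3 / c ^ 2) * (Real.exp (h * ν / (k * T)) - 1)⁻¹
        = (2 * h / c ^ 2) * (ν ^ 3 * (Real.exp (h / (k * T) * ν) - 1)⁻¹) := by
      intro ν hν
      rw [show h / (k * T) * ν = h * ν / (k * T) by ring]
      ring
    rw [setIntegral_congr_fun measurableSet_Ioi heq, integral_const_mul,
      aux_integral_planck ha]
  rw [hnum, hden]
  have hπ : Real.pi ≠ 0 := Real.pi_ne_zero
  field_simp
end

section
/- Let h, k, c, T be positive real numbers. Then ∫_0^∞ (2h²ν⁴/(c²kT²))·e^{hν/(kT)}·(e^{hν/(kT)} − 1)^{−2} dν = 8π⁴k⁴T³/(15 c² h³). -/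
open MeasureTheory Real Set

-- integrability of x^4 exp(-b x) on Ioi 0
lemma aux_integrable {b : ℝ} (hb : 0 < b) :
    IntegrableOn (fun x : ℝ => x ^ 4 * Real.exp (-(b * x))) (Ioi 0) := by
  have := integrableOn_rpow_mul_exp_neg_mul_rpow (p := 1) (s := 4) (b := b)
    (by norm_num) one_pos hb
  refine this.congr_fun (fun x hx => ?_) measurableSet_Ioi
  dsimp only
  rw [Real.rpow_one, ← Real.rpow_natCast x 4]
  norm_num

-- the value
lemma aux_integral {b : ℝ} (hb : 0 < b) :
    ∫ x in Ioi (0 : ℝ), x ^ 4 * Real.exp (-(b * x)) = 24 / b ^ 5 := by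
  have H := Real.integral_rpow_mul_exp_neg_mul_Ioi (a := 5) (r := b) (by norm_num) hb
  have : ∫ t in Ioi (0:ℝ), t ^ ((5:ℝ) - 1) * Real.exp (-(b * t))
      = ∫ x in Ioi (0:ℝ), x ^ 4 * Real.exp (-(b * x)) := by
    refine setIntegral_congr_fun measurableSet_Ioi (fun x hx => ?_)
    rw [show (5:ℝ) - 1 = ((4:ℕ):ℝ) by norm_num, Real.rpow_natCast]
  rw [this] at H
  rw [H]
  rw [show (5:ℝ) = (4:ℕ) + 1 by norm_num, Real.Gamma_nat_eq_factorial]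
  rw [div_rpow (by norm_num) hb.le, Real.one_rpow,
    show ((4:ℕ)+1 : ℝ) = ((5:ℕ):ℝ) by norm_num, Real.rpow_natCast]
  norm_num [div_eq_mul_inv, mul_comm, Nat.factorial]

lemma aux_series {x : ℝ} (hx : 0 < x) :
    HasSum (fun n : ℕ => ((n : ℝ) + 1) * (x ^ 4 * Real.exp (-(((n : ℝ) + 1) * x))))
      (x ^ 4 * Real.exp x / (Real.exp x - 1) ^ 2) := by
  have hr : ‖Real.exp (-x)‖ < 1 := by
    rw [Real.norm_eq_abs, abs_of_pos (Real.exp_pos _)]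
    exact Real.exp_lt_one_iff.mpr (by linarith)
  have H := hasSum_coe_mul_geometric_of_norm_lt_one (𝕜 := ℝ) hr
  have H1 : HasSum (fun n : ℕ => ((n : ℝ) + 1) * Real.exp (-x) ^ (n + 1))
      (Real.exp (-x) / (1 - Real.exp (-x)) ^ 2) := by
    have h2 := (hasSum_nat_add_iff' (f := fun n : ℕ => (n : ℝ) * Real.exp (-x) ^ n) 1).mpr H
    simp only [Finset.range_one, Finset.sum_singleton, Nat.cast_zero, zero_mul,
      sub_zero] at h2
    have he : (fun n : ℕ => ((n + 1 : ℕ) : ℝ) * Real.exp (-x) ^ (n + 1))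
        = fun n : ℕ => ((n : ℝ) + 1) * Real.exp (-x) ^ (n + 1) := by
      funext n; push_cast; ring
    simpa [he] using h2
  have H2 := H1.mul_left (x ^ 4)
  have he2 : (fun n : ℕ => x ^ 4 * (((n : ℝ) + 1) * Real.exp (-x) ^ (n + 1)))
      = fun n : ℕ => ((n : ℝ) + 1) * (x ^ 4 * Real.exp (-(((n : ℝ) + 1) * x))) := by
    funext n
    rw [← Real.exp_nat_mul, show ((n + 1 : ℕ) : ℝ) * (-x) = -(((n : ℝ) + 1) * x) by push_cast; ring]
    ring
  rw [he2] at H2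
  convert H2 using 1
  case e'_3 => rfl
  have hE1 : (1 : ℝ) < Real.exp x := by
    rw [← Real.exp_zero]; exact Real.exp_lt_exp.mpr hx
  have h0 : Real.exp x ≠ 0 := (Real.exp_pos x).ne'
  have h1 : Real.exp x - 1 ≠ 0 := by linarith
  rw [Real.exp_neg]
  field_simp

lemma aux_key : ∫ x in Ioi (0 : ℝ), x ^ 4 * Real.exp x / (Real.exp x - 1) ^ 2
    = 4 * π ^ 4 / 15 := by
  set f : ℕ → ℝ → ℝ := fun n x => ((n : ℝ) + 1) * (x ^ 4 * Real.exp (-(((n : ℝ) + 1) * x)))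
    with hf
  have hb : ∀ n : ℕ, (0 : ℝ) < (n : ℝ) + 1 := fun n => by positivity
  have hnonneg : ∀ n x, 0 ≤ f n x := fun n x => by
    simp only [hf]; positivity
  have hint : ∀ n : ℕ, IntegrableOn (f n) (Ioi 0) := fun n =>
    ((aux_integrable (hb n)).const_mul _)
  have hval : ∀ n : ℕ, ∫ x in Ioi (0 : ℝ), f n x = 24 / ((n : ℝ) + 1) ^ 4 := by
    intro n
    simp only [hf]
    rw [MeasureTheory.integral_const_mul, aux_integral (hb n)]
    field_simp
  have hmeas : ∀ n : ℕ, AEStronglyMeasurable (f n) (volume.restrict (Ioi 0)) := by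
    intro n
    apply Measurable.aestronglyMeasurable
    fun_prop
  have hsummable : Summable (fun n : ℕ => 24 / ((n : ℝ) + 1) ^ 4) := by
    have h1 : Summable (fun n : ℕ => 1 / ((n : ℝ)) ^ 4) := by
      simpa using Real.summable_one_div_nat_pow.mpr (by norm_num : 1 ≤ 4)
    have h2 := (summable_nat_add_iff 1).mpr h1
    refine ((h2.mul_left 24).congr fun n => ?_)
    push_cast
    field_simp
  have hfin : ∑' n : ℕ, ∫⁻ x, ‖f n x‖₊ ∂(volume.restrict (Ioi 0)) ≠ ⊤ := by
    have heq : ∀ n : ℕ, ∫⁻ x, ‖f n x‖₊ ∂(volume.restrict (Ioi 0))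
        = ENNReal.ofReal (24 / ((n : ℝ) + 1) ^ 4) := by
      intro n
      rw [← hval n, MeasureTheory.ofReal_integral_eq_lintegral_ofReal (hint n)
        (Filter.Eventually.of_forall (hnonneg n))]
      refine lintegral_congr fun x => ?_
      rw [← Real.enorm_eq_ofReal (hnonneg n x)]
      exact (enorm_eq_nnnorm _).symm
    simp_rw [heq]
    rw [← ENNReal.ofReal_tsum_of_nonneg (fun n => by positivity) hsummable]
    exact ENNReal.ofReal_ne_top
  have hrw : ∫ x in Ioi (0 : ℝ), x ^ 4 * Real.exp x / (Real.exp x - 1) ^ 2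
      = ∫ x in Ioi (0 : ℝ), ∑' n : ℕ, f n x := by
    refine setIntegral_congr_fun measurableSet_Ioi fun x hx => ?_
    exact ((aux_series hx).tsum_eq).symm
  rw [hrw, MeasureTheory.integral_tsum hmeas hfin]
  simp_rw [hval]
  have hz : HasSum (fun n : ℕ => 1 / (((n : ℕ) : ℝ)) ^ 4) (π ^ 4 / 90) := hasSum_zeta_four
  have hz1 : HasSum (fun n : ℕ => 1 / (((n : ℝ)) + 1) ^ 4) (π ^ 4 / 90) := by
    have := (hasSum_nat_add_iff' (f := fun n : ℕ => 1 / ((n : ℝ)) ^ 4) 1).mpr hz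
    simp only [Finset.range_one, Finset.sum_singleton, Nat.cast_zero] at this
    norm_num at this
    refine this.congr_fun fun n => ?_
    push_cast
    ring
  have := (hz1.mul_left 24).tsum_eq
  rw [show (fun n : ℕ => 24 / ((n : ℝ) + 1) ^ 4)
      = fun n : ℕ => 24 * (1 / ((n : ℝ) + 1) ^ 4) by funext n; ring, this]
  ring

/-- The frequency-integrated temperature derivative of the Planck spectral radiance:
`∫_0^∞ (2h²ν⁴/(c²kT²)) e^{hν/(kT)} (e^{hν/(kT)} − 1)⁻² dν = 8π⁴k⁴T³/(15c²h³)`. -/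
theorem planck_temperature_derivative_integral (h k c T : ℝ)
    (hh : 0 < h) (hk : 0 < k) (hc : 0 < c) (hT : 0 < T) :
    ∫ ν in Set.Ioi (0 : ℝ),
        (2 * h ^ 2 * ν ^ 4 / (c ^ 2 * k * T ^ 2)) * Real.exp (h * ν / (k * T))
          / (Real.exp (h * ν / (k * T)) - 1) ^ 2
      = 8 * Real.pi ^ 4 * k ^ 4 * T ^ 3 / (15 * c ^ 2 * h ^ 3) := by
  set a : ℝ := h / (k * T) with ha_def
  have ha : 0 < a := by positivity
  set g : ℝ → ℝ := fun x => x ^ 4 * Real.exp x / (Real.exp x - 1) ^ 2 with hg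
  set C : ℝ := 2 * h ^ 2 / (c ^ 2 * k * T ^ 2 * a ^ 4) with hC
  have hrw : ∀ ν ∈ Ioi (0 : ℝ),
      (2 * h ^ 2 * ν ^ 4 / (c ^ 2 * k * T ^ 2)) * Real.exp (h * ν / (k * T))
          / (Real.exp (h * ν / (k * T)) - 1) ^ 2 = C • g (a * ν) := by
    intro ν _
    have harg : h * ν / (k * T) = a * ν := by
      rw [ha_def]; ring
    have hCa : C * a ^ 4 = 2 * h ^ 2 / (c ^ 2 * k * T ^ 2) := by
      rw [hC]
      field_simp
    rw [harg, hg, smul_eq_mul]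
    calc 2 * h ^ 2 * ν ^ 4 / (c ^ 2 * k * T ^ 2) * Real.exp (a * ν)
          / (Real.exp (a * ν) - 1) ^ 2
        = (C * a ^ 4) * ν ^ 4 * Real.exp (a * ν) / (Real.exp (a * ν) - 1) ^ 2 := by
          rw [hCa]; ring
      _ = C * ((a * ν) ^ 4 * Real.exp (a * ν) / (Real.exp (a * ν) - 1) ^ 2) := by ring
  rw [setIntegral_congr_fun measurableSet_Ioi hrw, MeasureTheory.integral_smul,
    integral_comp_mul_left_Ioi g 0 ha, mul_zero, aux_key, smul_eq_mul, smul_eq_mul, hC, ha_def]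
  field_simp
  ring
end
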